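/- Let a₁, a₂, a₃, a₄, b₁, b₂, b₃ be real numbers with 0 ≤ aᵢ ≤ π and 0 ≤ bⱼ ≤ π for all i, j, and with a₁+a₂+a₃+a₄+b₁+b₂+b₃ ≤ 2π. Then −Λ(a₁+a₂+a₃+a₄+b₁+b₂+b₃) + Σ_{i=1}^4 Λ(aᵢ) + Σ_{j=1}^3 Λ(bⱼ) + Λ((a₁+b₁)+(a₂+b₂)+(a₃+b₃)) − Λ(a₁+b₁) − Λ(a₂+b₂) − Λ(a₃+b₃) ≤ 8·Λ(π/4) = v₈. -/

import Mathlib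

open Real Filter

noncomputable def Lob (x : ℝ) : ℝ := -∫ t in (0:ℝ)..x, Real.log |2 * Real.sin t|

noncomputable def v8 : ℝ := 8 * Lob (Real.pi / 4)

noncomputable def nu (a b c : ℝ) : ℝ :=
  (1/2) * (Lob ((a+b+c)/2) - Lob ((a+b-c)/2) - Lob ((a-b+c)/2) - Lob ((-a+b+c)/2))

noncomputable def Ffun (Z t1 t2 t3 t4 t5 t6 : ℝ) : ℝ :=
  Lob (Z - (t1+t2+t3)/2) + Lob (Z - (t1+t5+t6)/2) + Lob (Z - (t2+t4+t6)/2) +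
    Lob (Z - (t3+t4+t5)/2) + Lob ((t1+t2+t4+t5)/2 - Z) + Lob ((t1+t3+t4+t6)/2 - Z) +
    Lob ((t2+t3+t5+t6)/2 - Z) - Lob Z

noncomputable def Umax (t1 t2 t3 t4 t5 t6 : ℝ) : ℝ :=
  max (max ((t1+t2+t3)/2) ((t1+t5+t6)/2)) (max ((t2+t4+t6)/2) ((t3+t4+t5)/2))

noncomputable def Vmin (t1 t2 t3 t4 t5 t6 : ℝ) : ℝ :=
  min (min ((t1+t2+t4+t5)/2) ((t1+t3+t4+t6)/2)) ((t2+t3+t5+t6)/2)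

noncomputable def bigV (t1 t2 t3 t4 t5 t6 : ℝ) : ℝ :=
  sSup ((fun Z => Ffun Z t1 t2 t3 t4 t5 t6) ''
      Set.Icc (Umax t1 t2 t3 t4 t5 t6) (min (Vmin t1 t2 t3 t4 t5 t6) (2 * Real.pi))) +
    nu t1 t2 t3 + nu t1 t5 t6 + nu t2 t4 t6 + nu t3 t4 t5


/-
Write D(x, y) = Λx + Λy − Λ(x + y), sᵢ = aᵢ + bᵢ and σ = s₁ + s₂ + s₃. The left-hand side is
D(a₁, b₁) + D(a₂, b₂) + D(a₃, b₃) + D(a₄, σ), and D(a₄, σ) only depends on σ mod π.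
Since Λ' = −log |2 sin|, the function u ↦ Λu + Λ(s − u) increases on [0, s/2] when s ≤ π; this
gives midpoint concavity and subadditivity of Λ on [0, π]. Together with the duplication formula
Λ(2x) = 2Λx + 2Λ(x + π/2) they bound D(x, y), for x, y ∈ [0, π], by 2Λ((π − x − y)/2) if
x + y ≤ π, by 0 if x + y ≥ π, and by 2Λ(y/2) ≤ 2Λ(π/6) in either case.

If some sᵢ ≥ π, the total is at most 6Λ(π/6). Otherwise concavity bounds the first three terms
by 6Λ(π/2 − σ/6). For σ ≤ π this is at most 6Λ(π/3) = 4Λ(π/6), so again the total is at most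
6Λ(π/6). For σ ≥ π, put τ = σ/6 − π/4 ∈ [−π/12, π/12]: the total is at most
2(3Λ(π/4 − τ) + Λ(π/4 + 3τ)), and this function of τ is maximal at τ = 0.
Finally 6Λ(π/6) ≤ π ≤ 8Λ(π/4), by comparing 2 sin t with a chord of sin and with 2t.
-/

open MeasureTheory Set intervalIntegral

noncomputable def logAbsTwoSin (t : ℝ) : ℝ := log |2 * sin t|

lemma logAbsTwoSin_neg (t : ℝ) : logAbsTwoSin (-t) = logAbsTwoSin t := by
  simp [logAbsTwoSin, abs_mul]

lemma logAbsTwoSin_periodic : Function.Periodic logAbsTwoSin π := by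
  intro t
  simp [logAbsTwoSin, sin_add_pi, abs_mul]

lemma logAbsTwoSin_pi_div_six : logAbsTwoSin (π / 6) = 0 := by
  simp [logAbsTwoSin, sin_pi_div_six]

lemma intervalIntegrable_logAbsTwoSin (a b : ℝ) :
    IntervalIntegrable logAbsTwoSin volume a b :=
  (analyticOnNhd_const.mul analyticOnNhd_sin).meromorphicOn.intervalIntegrable_log_norm

lemma continuousAt_logAbsTwoSin {t : ℝ} (ht : sin t ≠ 0) : ContinuousAt logAbsTwoSin t :=
  (continuous_const.mul continuous_sin).abs.continuousAt.log (by simpa using ht)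

lemma sin_le_sin_of_le_of_add_le_pi {u v : ℝ} (hu : 0 ≤ u) (huv : u ≤ v) (h : u + v ≤ π) :
    sin u ≤ sin v := by
  have hsin : 0 ≤ sin ((v - u) / 2) := sin_nonneg_of_nonneg_of_le_pi (by linarith) (by linarith)
  have hcos : 0 ≤ cos ((v + u) / 2) := cos_nonneg_of_mem_Icc ⟨by linarith, by linarith⟩
  nlinarith [sin_sub_sin v u]

lemma logAbsTwoSin_le_logAbsTwoSin {u v : ℝ} (hu : 0 < u) (huv : u ≤ v) (h : u + v ≤ π) :
    logAbsTwoSin u ≤ logAbsTwoSin v := by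
  have hsin_u : 0 < sin u := sin_pos_of_pos_of_lt_pi hu (by linarith)
  have hsin := sin_le_sin_of_le_of_add_le_pi hu.le huv h
  unfold logAbsTwoSin
  rw [abs_of_pos (by linarith), abs_of_pos (by linarith)]
  exact log_le_log (by linarith) (by linarith)

lemma logAbsTwoSin_two_mul {t : ℝ} (ht : sin (2 * t) ≠ 0) :
    logAbsTwoSin (2 * t) = logAbsTwoSin t + logAbsTwoSin (t + π / 2) := by
  rw [sin_two_mul] at ht
  have hs : 2 * sin t ≠ 0 := by intro h; apply ht; linear_combination cos t * h
  have hc : 2 * cos t ≠ 0 := by intro h; apply ht; linear_combination sin t * h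
  simp only [logAbsTwoSin, log_abs, sin_add_pi_div_two, sin_two_mul, ← log_mul hs hc]
  ring_nf

lemma Lob_eq_neg_integral (x : ℝ) : Lob x = -∫ t in (0 : ℝ)..x, logAbsTwoSin t := rfl

lemma integral_logAbsTwoSin (a b : ℝ) : ∫ t in a..b, logAbsTwoSin t = Lob a - Lob b := by
  rw [Lob_eq_neg_integral, Lob_eq_neg_integral, ← integral_interval_sub_left
    (intervalIntegrable_logAbsTwoSin 0 b) (intervalIntegrable_logAbsTwoSin 0 a)]
  ring

lemma Lob_zero : Lob 0 = 0 := by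
  simp [Lob_eq_neg_integral]

lemma Lob_neg (x : ℝ) : Lob (-x) = -Lob x := by
  have h := integral_comp_neg (a := 0) (b := x) logAbsTwoSin
  simp only [logAbsTwoSin_neg, neg_zero, integral_logAbsTwoSin, Lob_zero] at h
  linarith

@[fun_prop]
lemma continuous_Lob : Continuous Lob :=
  (continuous_primitive intervalIntegrable_logAbsTwoSin 0).neg

lemma hasDerivAt_Lob {x : ℝ} (hx : sin x ≠ 0) : HasDerivAt Lob (-logAbsTwoSin x) x := by
  have hmeas : Measurable logAbsTwoSin := by unfold logAbsTwoSin; fun_prop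
  exact (integral_hasDerivAt_right (intervalIntegrable_logAbsTwoSin 0 x)
    hmeas.stronglyMeasurable.stronglyMeasurableAtFilter (continuousAt_logAbsTwoSin hx)).neg

lemma HasDerivAt.Lob {f : ℝ → ℝ} {f' x : ℝ} (hf : HasDerivAt f f' x)
    (hx : Real.sin (f x) ≠ 0) :
    HasDerivAt (fun t => Lob (f t)) (-logAbsTwoSin (f x) * f') x :=
  (hasDerivAt_Lob hx).comp x hf

lemma Lob_two_mul_add_two_mul_Lob_pi_div_two (x : ℝ) :
    Lob (2 * x) + 2 * Lob (π / 2) = 2 * Lob x + 2 * Lob (x + π / 2) := by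
  have hzeros : {u : ℝ | sin (2 * u) = 0} ⊆ range (fun k : ℤ => k * π / 2) := by
    intro u hu
    obtain ⟨k, hk⟩ := sin_eq_zero_iff.mp hu
    exact ⟨k, by linarith⟩
  have hae : ∀ᵐ u, logAbsTwoSin (2 * u) = logAbsTwoSin u + logAbsTwoSin (u + π / 2) := by
    refine measure_mono_null (fun u hu => ?_)
      ((countable_range _).mono hzeros |>.measure_zero _)
    by_contra h
    exact hu (logAbsTwoSin_two_mul h)
  have hshift : IntervalIntegrable (fun u => logAbsTwoSin (u + π / 2)) volume 0 x := by
    simpa using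
      (intervalIntegrable_logAbsTwoSin (0 + π / 2) (x + π / 2)).comp_add_right (π / 2)
  have h : ∫ u in (0 : ℝ)..x, logAbsTwoSin (2 * u) =
      ∫ u in (0 : ℝ)..x, (logAbsTwoSin u + logAbsTwoSin (u + π / 2)) :=
    intervalIntegral.integral_congr_ae (hae.mono fun u hu _ => hu)
  rw [integral_comp_mul_left _ two_ne_zero,
    integral_add (intervalIntegrable_logAbsTwoSin 0 x) hshift, integral_comp_add_right] at h
  simp only [mul_zero, zero_add, integral_logAbsTwoSin, Lob_zero, smul_eq_mul] at h
  linarith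

lemma Lob_pi : Lob π = 0 := by
  have h := Lob_two_mul_add_two_mul_Lob_pi_div_two (π / 2)
  rw [mul_div_cancel₀ _ two_ne_zero, add_halves] at h
  linarith

lemma Lob_add_pi (x : ℝ) : Lob (x + π) = Lob x := by
  have h := logAbsTwoSin_periodic.intervalIntegral_add_eq x 0
  simp only [integral_logAbsTwoSin, zero_add, Lob_zero, Lob_pi] at h
  linarith

lemma Lob_pi_sub (x : ℝ) : Lob (π - x) = -Lob x := by
  rw [sub_eq_neg_add, Lob_add_pi, Lob_neg]

lemma Lob_pi_div_two : Lob (π / 2) = 0 := by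
  have h := Lob_two_mul_add_two_mul_Lob_pi_div_two (π / 4)
  rw [show 2 * (π / 4) = π / 2 by ring, show π / 4 + π / 2 = π - π / 4 by ring,
    Lob_pi_sub] at h
  linarith

lemma Lob_two_mul (x : ℝ) : Lob (2 * x) = 2 * Lob x + 2 * Lob (x + π / 2) := by
  linarith [Lob_two_mul_add_two_mul_Lob_pi_div_two x, Lob_pi_div_two]

lemma two_mul_Lob_half_sub_Lob (s : ℝ) :
    2 * Lob (s / 2) - Lob s = 2 * Lob ((π - s) / 2) := by
  have h := Lob_two_mul (s / 2)
  rw [mul_div_cancel₀ _ two_ne_zero, show s / 2 + π / 2 = π - (π - s) / 2 by ring,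
    Lob_pi_sub] at h
  linarith

lemma three_mul_Lob_pi_div_three : 3 * Lob (π / 3) = 2 * Lob (π / 6) := by
  have h := Lob_two_mul (π / 6)
  rw [show 2 * (π / 6) = π / 3 by ring, show π / 6 + π / 2 = π - π / 3 by ring,
    Lob_pi_sub] at h
  linarith

lemma monotoneOn_Icc_of_hasDerivAt_nonneg {f f' : ℝ → ℝ} {a b : ℝ} (hf : Continuous f)
    (hf' : ∀ x ∈ Ioo a b, HasDerivAt f (f' x) x) (hf'₀ : ∀ x ∈ Ioo a b, 0 ≤ f' x) :
    MonotoneOn f (Icc a b) :=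
  monotoneOn_of_hasDerivWithinAt_nonneg (convex_Icc a b) hf.continuousOn
    (by simpa using fun x hx => (hf' x hx).hasDerivWithinAt) (by simpa using hf'₀)

lemma antitoneOn_Icc_of_hasDerivAt_nonpos {f f' : ℝ → ℝ} {a b : ℝ} (hf : Continuous f)
    (hf' : ∀ x ∈ Ioo a b, HasDerivAt f (f' x) x) (hf'₀ : ∀ x ∈ Ioo a b, f' x ≤ 0) :
    AntitoneOn f (Icc a b) :=
  antitoneOn_of_hasDerivWithinAt_nonpos (convex_Icc a b) hf.continuousOn
    (by simpa using fun x hx => (hf' x hx).hasDerivWithinAt) (by simpa using hf'₀)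

lemma monotoneOn_Lob : MonotoneOn Lob (Icc 0 (π / 6)) := by
  refine monotoneOn_Icc_of_hasDerivAt_nonneg continuous_Lob
    (fun x hx => hasDerivAt_Lob (sin_pos_of_mem_Ioo ⟨hx.1, by linarith [hx.2, pi_pos]⟩).ne')
    fun x hx => ?_
  have := logAbsTwoSin_le_logAbsTwoSin hx.1 hx.2.le (by linarith [hx.2, pi_pos])
  rw [logAbsTwoSin_pi_div_six] at this
  linarith

lemma antitoneOn_Lob : AntitoneOn Lob (Icc (π / 6) (5 * π / 6)) := by
  refine antitoneOn_Icc_of_hasDerivAt_nonpos continuous_Lob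
    (fun x hx => hasDerivAt_Lob (sin_pos_of_mem_Ioo
      ⟨by linarith [hx.1, pi_pos], by linarith [hx.2, pi_pos]⟩).ne') fun x hx => ?_
  have := logAbsTwoSin_le_logAbsTwoSin (by positivity) hx.1.le (by linarith [hx.2])
  rw [logAbsTwoSin_pi_div_six] at this
  linarith

lemma Lob_le_Lob_pi_div_six {x : ℝ} (hx : 0 ≤ x) (hx' : x ≤ 5 * π / 6) :
    Lob x ≤ Lob (π / 6) := by
  have := pi_pos
  rcases le_total x (π / 6) with h | h
  · exact monotoneOn_Lob ⟨hx, h⟩ ⟨by positivity, le_rfl⟩ h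
  · exact antitoneOn_Lob ⟨le_rfl, by linarith⟩ ⟨h, hx'⟩ h

lemma Lob_nonneg {x : ℝ} (hx : 0 ≤ x) (hx' : x ≤ π / 2) : 0 ≤ Lob x := by
  have := pi_pos
  rcases le_total x (π / 6) with h | h
  · simpa [Lob_zero] using monotoneOn_Lob ⟨le_rfl, by positivity⟩ ⟨hx, h⟩ hx
  · simpa [Lob_pi_div_two] using
      antitoneOn_Lob ⟨h, by linarith⟩ ⟨by linarith, by linarith⟩ hx'

lemma monotoneOn_Lob_add_Lob_sub {s : ℝ} (hs : s ≤ π) :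
    MonotoneOn (fun u => Lob u + Lob (s - u)) (Icc 0 (s / 2)) := by
  refine monotoneOn_Icc_of_hasDerivAt_nonneg (by fun_prop)
    (f' := fun u => logAbsTwoSin (s - u) - logAbsTwoSin u) (fun u hu => ?_) fun u hu => ?_
  · have hu_pos := sin_pos_of_mem_Ioo ⟨hu.1, by linarith [hu.1, hu.2]⟩
    have hsu_pos := sin_pos_of_mem_Ioo (x := s - u) ⟨by linarith [hu.1, hu.2], by linarith [hu.1]⟩
    refine ((hasDerivAt_Lob hu_pos.ne').add
      (((hasDerivAt_id' u).const_sub s).Lob hsu_pos.ne')).congr_deriv ?_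
    ring
  · exact sub_nonneg.2 (logAbsTwoSin_le_logAbsTwoSin hu.1 (by linarith [hu.2]) (by linarith))

lemma Lob_add_Lob_le_two_mul_Lob_half {x y : ℝ} (hx : 0 ≤ x) (hy : 0 ≤ y) (hxy : x + y ≤ π) :
    Lob x + Lob y ≤ 2 * Lob ((x + y) / 2) := by
  wlog h : x ≤ y generalizing x y
  · simpa [add_comm] using this hy hx (by linarith) (by linarith)
  have := monotoneOn_Lob_add_Lob_sub hxy ⟨hx, by linarith⟩ ⟨by positivity, le_rfl⟩ (by linarith)
  simp only [add_sub_cancel_left, show x + y - (x + y) / 2 = (x + y) / 2 by ring] at this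
  linarith

lemma Lob_add_le_Lob_add_Lob {x y : ℝ} (hx : 0 ≤ x) (hy : 0 ≤ y) (hxy : x + y ≤ π) :
    Lob (x + y) ≤ Lob x + Lob y := by
  wlog h : x ≤ y generalizing x y
  · simpa [add_comm] using this hy hx (by linarith) (by linarith)
  have := monotoneOn_Lob_add_Lob_sub hxy ⟨le_rfl, by positivity⟩ ⟨hx, by linarith⟩ hx
  simpa [Lob_zero] using this

lemma three_mul_Lob_pi_div_four_sub_add_Lob_le {τ : ℝ} (hτ : -(π / 12) ≤ τ)
    (hτ' : τ ≤ π / 12) : 3 * Lob (π / 4 - τ) + Lob (π / 4 + 3 * τ) ≤ 4 * Lob (π / 4) := by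
  set f := fun τ => 3 * Lob (π / 4 - τ) + Lob (π / 4 + 3 * τ)
  have hf' : ∀ τ ∈ Ioo (-(π / 12)) (π / 12),
      HasDerivAt f (3 * (logAbsTwoSin (π / 4 - τ) - logAbsTwoSin (π / 4 + 3 * τ))) τ := by
    intro τ hτ
    have h1 := ((hasDerivAt_id' τ).const_sub (π / 4)).Lob
      ((sin_pos_of_mem_Ioo ⟨by linarith [hτ.2], by linarith [hτ.1]⟩).ne')
    have h2 := (((hasDerivAt_id' τ).const_mul 3).const_add (π / 4)).Lob
      ((sin_pos_of_mem_Ioo ⟨by linarith [hτ.1], by linarith [hτ.2]⟩).ne')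
    refine ((h1.const_mul 3).add h2).congr_deriv ?_
    ring
  have hf : Continuous f := by fun_prop
  have h0 : f 0 = 4 * Lob (π / 4) := by simp only [f, mul_zero, sub_zero, add_zero]; ring
  rw [← h0]
  rcases le_total τ 0 with h | h
  · refine monotoneOn_Icc_of_hasDerivAt_nonneg hf
      (fun x hx => hf' x ⟨hx.1, by linarith [hx.2]⟩) (fun x hx => ?_)
      ⟨hτ, h⟩ ⟨by linarith [pi_pos], le_rfl⟩ h
    have := logAbsTwoSin_le_logAbsTwoSin (u := π / 4 + 3 * x) (v := π / 4 - x)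
      (by linarith [hx.1]) (by linarith [hx.2]) (by linarith [hx.2, pi_pos])
    linarith
  · refine antitoneOn_Icc_of_hasDerivAt_nonpos hf
      (fun x hx => hf' x ⟨by linarith [hx.1], hx.2⟩) (fun x hx => ?_)
      ⟨le_rfl, by linarith [pi_pos]⟩ ⟨h, hτ'⟩ h
    have := logAbsTwoSin_le_logAbsTwoSin (u := π / 4 - x) (v := π / 4 + 3 * x)
      (by linarith [hx.2]) (by linarith [hx.1]) (by linarith [hx.2])
    linarith

lemma integral_log_mul {k : ℝ} (hk : k ≠ 0) (c : ℝ) :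
    ∫ t in (0 : ℝ)..c, log (k * t) = c * log (k * c) - c := by
  rw [integral_comp_mul_left (fun t => log t) hk, integral_log]
  simp only [mul_zero, log_zero, smul_eq_mul]
  field_simp
  ring

lemma intervalIntegrable_log_mul (k a b : ℝ) :
    IntervalIntegrable (fun t => log (k * t)) volume a b :=
  (analyticOnNhd_const.mul analyticOnNhd_id).meromorphicOn.intervalIntegrable_log

lemma div_mul_sin_le_sin {t c : ℝ} (ht : 0 ≤ t) (htc : t ≤ c) (hc : c ≤ π) :
    t / c * sin c ≤ sin t := by
  rcases ht.eq_or_lt with rfl | ht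
  · simp
  have hc0 : 0 < c := ht.trans_le htc
  have := strictConcaveOn_sin_Icc.concaveOn.2 (⟨le_rfl, pi_pos.le⟩ : (0 : ℝ) ∈ Icc 0 π)
    (⟨hc0.le, hc⟩ : c ∈ Icc 0 π) (sub_nonneg.2 ((div_le_one hc0).2 htc) : 0 ≤ 1 - t / c)
    (by positivity : 0 ≤ t / c) (by ring)
  simpa [div_mul_cancel₀ _ hc0.ne'] using this

lemma mul_one_sub_log_two_mul_le_Lob {c : ℝ} (hc : 0 ≤ c) (hcπ : c ≤ π) :
    c * (1 - log (2 * c)) ≤ Lob c := by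
  have h : ∫ t in (0 : ℝ)..c, logAbsTwoSin t ≤ ∫ t in (0 : ℝ)..c, log (2 * t) := by
    refine integral_mono_on_of_le_Ioo hc (intervalIntegrable_logAbsTwoSin 0 c)
      (intervalIntegrable_log_mul 2 0 c) fun t ht => ?_
    have hsin : 0 < sin t := sin_pos_of_pos_of_lt_pi ht.1 (by linarith [ht.2])
    rw [logAbsTwoSin, abs_of_pos (by linarith)]
    exact log_le_log (by linarith) (by linarith [sin_le ht.1.le])
  rw [integral_log_mul two_ne_zero, integral_logAbsTwoSin, Lob_zero] at h
  linarith

lemma Lob_le_mul_one_sub_log_two_mul_sin {c : ℝ} (hc : 0 < c) (hcπ : c < π) :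
    Lob c ≤ c * (1 - log (2 * sin c)) := by
  have hsin : 0 < sin c := sin_pos_of_pos_of_lt_pi hc hcπ
  have h : ∫ t in (0 : ℝ)..c, log (2 * sin c / c * t) ≤
      ∫ t in (0 : ℝ)..c, logAbsTwoSin t := by
    refine integral_mono_on_of_le_Ioo hc.le (intervalIntegrable_log_mul _ 0 c)
      (intervalIntegrable_logAbsTwoSin 0 c) fun t ht => ?_
    have hchord := div_mul_sin_le_sin ht.1.le ht.2.le hcπ.le
    have hsin_t : 0 < sin t := sin_pos_of_pos_of_lt_pi ht.1 (ht.2.trans hcπ)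
    rw [logAbsTwoSin, abs_of_pos (by linarith)]
    refine log_le_log (by have := ht.1; positivity) ?_
    calc 2 * sin c / c * t = 2 * (t / c * sin c) := by ring
      _ ≤ 2 * sin t := by linarith
  rw [integral_log_mul (by positivity), div_mul_cancel₀ _ hc.ne', integral_logAbsTwoSin,
    Lob_zero] at h
  linarith

lemma log_pi_div_two_le : log (π / 2) ≤ 1 / 2 := by
  rw [log_le_iff_le_exp (by positivity)]
  nlinarith [quadratic_le_exp_of_nonneg (x := 1 / 2) (by norm_num), pi_lt_d2]

lemma six_mul_Lob_pi_div_six_le : 6 * Lob (π / 6) ≤ 8 * Lob (π / 4) := by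
  have h6 := Lob_le_mul_one_sub_log_two_mul_sin (c := π / 6) (by positivity)
    (by linarith [pi_pos])
  have h4 := mul_one_sub_log_two_mul_le_Lob (c := π / 4) (by positivity) (by linarith [pi_pos])
  rw [sin_pi_div_six] at h6
  rw [show 2 * (π / 4) = π / 2 by ring] at h4
  norm_num at h6
  nlinarith [log_pi_div_two_le, pi_pos]

noncomputable def lobDefect (x y : ℝ) : ℝ := Lob x + Lob y - Lob (x + y)

lemma lobDefect_add_pi (x y : ℝ) : lobDefect x (y + π) = lobDefect x y := by
  simp only [lobDefect, Lob_add_pi, ← add_assoc]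

lemma lobDefect_le_two_mul_Lob_pi_sub_half {x y : ℝ} (hx : 0 ≤ x) (hy : 0 ≤ y)
    (hxy : x + y ≤ π) : lobDefect x y ≤ 2 * Lob ((π - (x + y)) / 2) := by
  unfold lobDefect
  linarith [Lob_add_Lob_le_two_mul_Lob_half hx hy hxy, two_mul_Lob_half_sub_Lob (x + y)]

lemma lobDefect_nonpos {x y : ℝ} (hx : x ≤ π) (hy : y ≤ π) (hxy : π ≤ x + y) :
    lobDefect x y ≤ 0 := by
  have h := Lob_add_le_Lob_add_Lob (x := π - x) (y := π - y) (by linarith) (by linarith)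
    (by linarith)
  rw [show π - x + (π - y) = π - (x + y - π) by ring, Lob_pi_sub, Lob_pi_sub, Lob_pi_sub,
    ← Lob_add_pi (x + y - π), sub_add_cancel] at h
  unfold lobDefect
  linarith

lemma lobDefect_le_two_mul_Lob_half {x y : ℝ} (hx : 0 ≤ x) (hx' : x ≤ π) (hy : 0 ≤ y)
    (hy' : y ≤ π) : lobDefect x y ≤ 2 * Lob (y / 2) := by
  rcases le_total (x + y) π with h | h
  · have hM := Lob_add_Lob_le_two_mul_Lob_half (x := x) (y := π - (x + y)) hx (by linarith)
      (by linarith)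
    rw [show (x + (π - (x + y))) / 2 = (π - y) / 2 by ring, Lob_pi_sub] at hM
    unfold lobDefect
    linarith [two_mul_Lob_half_sub_Lob y]
  · linarith [lobDefect_nonpos hx' hy' h, Lob_nonneg (x := y / 2) (by linarith) (by linarith)]

lemma lobDefect_le_two_mul_Lob_pi_div_six {x y : ℝ} (hx : 0 ≤ x) (hx' : x ≤ π) (hy : 0 ≤ y)
    (hxy : x + y ≤ 2 * π) : lobDefect x y ≤ 2 * Lob (π / 6) := by
  have key : ∀ z, 0 ≤ z → z ≤ π → lobDefect x z ≤ 2 * Lob (π / 6) := fun z hz hz' =>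
    (lobDefect_le_two_mul_Lob_half hx hx' hz hz').trans
      (by linarith [Lob_le_Lob_pi_div_six (x := z / 2) (by linarith) (by linarith)])
  rcases le_total y π with h | h
  · exact key y hy h
  · rw [← sub_add_cancel y π, lobDefect_add_pi]
    exact key _ (by linarith) (by linarith)

lemma Lob_add_Lob_add_Lob_le_three_mul_Lob_mean {u₁ u₂ u₃ : ℝ} (h₁ : u₁ ∈ Icc 0 (π / 2))
    (h₂ : u₂ ∈ Icc 0 (π / 2)) (h₃ : u₃ ∈ Icc 0 (π / 2)) :
    Lob u₁ + Lob u₂ + Lob u₃ ≤ 3 * Lob ((u₁ + u₂ + u₃) / 3) := by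
  set m := (u₁ + u₂ + u₃) / 3 with hm
  have h12 := Lob_add_Lob_le_two_mul_Lob_half h₁.1 h₂.1 (by linarith [h₁.2, h₂.2])
  have h3m := Lob_add_Lob_le_two_mul_Lob_half (x := u₃) (y := m) h₃.1
    (by linarith [h₁.1, h₂.1, h₃.1]) (by linarith [h₁.2, h₂.2, h₃.2])
  have hall := Lob_add_Lob_le_two_mul_Lob_half (x := (u₁ + u₂) / 2) (y := (u₃ + m) / 2)
    (by linarith [h₁.1, h₂.1]) (by linarith [h₁.1, h₂.1, h₃.1])
    (by linarith [h₁.2, h₂.2, h₃.2])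
  rw [show ((u₁ + u₂) / 2 + (u₃ + m) / 2) / 2 = m by ring] at hall
  linarith

lemma lobDefect_add_lobDefect_add_lobDefect_le {x₁ x₂ x₃ y₁ y₂ y₃ : ℝ} (hx₁ : 0 ≤ x₁)
    (hx₂ : 0 ≤ x₂) (hx₃ : 0 ≤ x₃) (hy₁ : 0 ≤ y₁) (hy₂ : 0 ≤ y₂) (hy₃ : 0 ≤ y₃)
    (h₁ : x₁ + y₁ ≤ π) (h₂ : x₂ + y₂ ≤ π) (h₃ : x₃ + y₃ ≤ π) :
    lobDefect x₁ y₁ + lobDefect x₂ y₂ + lobDefect x₃ y₃ ≤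
      6 * Lob (π / 2 - (x₁ + y₁ + (x₂ + y₂) + (x₃ + y₃)) / 6) := by
  have hJ := Lob_add_Lob_add_Lob_le_three_mul_Lob_mean (u₁ := (π - (x₁ + y₁)) / 2)
    (u₂ := (π - (x₂ + y₂)) / 2) (u₃ := (π - (x₃ + y₃)) / 2)
    ⟨by linarith, by linarith⟩ ⟨by linarith, by linarith⟩ ⟨by linarith, by linarith⟩
  rw [show ((π - (x₁ + y₁)) / 2 + (π - (x₂ + y₂)) / 2 + (π - (x₃ + y₃)) / 2) / 3 =
    π / 2 - (x₁ + y₁ + (x₂ + y₂) + (x₃ + y₃)) / 6 by ring] at hJ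
  linarith [lobDefect_le_two_mul_Lob_pi_sub_half hx₁ hy₁ h₁,
    lobDefect_le_two_mul_Lob_pi_sub_half hx₂ hy₂ h₂,
    lobDefect_le_two_mul_Lob_pi_sub_half hx₃ hy₃ h₃]

lemma lobDefect_add_lobDefect_add_lobDefect_le_of_pi_lt {x₁ x₂ x₃ y₁ y₂ y₃ : ℝ}
    (hx₁ : x₁ ∈ Icc 0 π) (hx₂ : x₂ ∈ Icc 0 π) (hx₃ : x₃ ∈ Icc 0 π) (hy₁ : y₁ ∈ Icc 0 π)
    (hy₂ : y₂ ∈ Icc 0 π) (hy₃ : y₃ ∈ Icc 0 π) (h : π < x₁ + y₁ ∨ π < x₂ + y₂ ∨ π < x₃ + y₃) :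
    lobDefect x₁ y₁ + lobDefect x₂ y₂ + lobDefect x₃ y₃ ≤ 4 * Lob (π / 6) := by
  have h₁ := lobDefect_le_two_mul_Lob_pi_div_six hx₁.1 hx₁.2 hy₁.1 (by linarith [hx₁.2, hy₁.2])
  have h₂ := lobDefect_le_two_mul_Lob_pi_div_six hx₂.1 hx₂.2 hy₂.1 (by linarith [hx₂.2, hy₂.2])
  have h₃ := lobDefect_le_two_mul_Lob_pi_div_six hx₃.1 hx₃.2 hy₃.1 (by linarith [hx₃.2, hy₃.2])
  rcases h with h | h | h
  · linarith [lobDefect_nonpos hx₁.2 hy₁.2 h.le]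
  · linarith [lobDefect_nonpos hx₂.2 hy₂.2 h.le]
  · linarith [lobDefect_nonpos hx₃.2 hy₃.2 h.le]

/-- the key inequality in the new variables a₁,…,a₄,b₁,b₂,b₃. -/
theorem L_le_v8 (a1 a2 a3 a4 b1 b2 b3 : ℝ)
    (ha1 : 0 ≤ a1) (ha1' : a1 ≤ Real.pi)
    (ha2 : 0 ≤ a2) (ha2' : a2 ≤ Real.pi)
    (ha3 : 0 ≤ a3) (ha3' : a3 ≤ Real.pi)
    (ha4 : 0 ≤ a4) (ha4' : a4 ≤ Real.pi)
    (hb1 : 0 ≤ b1) (hb1' : b1 ≤ Real.pi)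
    (hb2 : 0 ≤ b2) (hb2' : b2 ≤ Real.pi)
    (hb3 : 0 ≤ b3) (hb3' : b3 ≤ Real.pi)
    (hsum : a1 + a2 + a3 + a4 + b1 + b2 + b3 ≤ 2 * Real.pi) :
    -Lob (a1 + a2 + a3 + a4 + b1 + b2 + b3) + (Lob a1 + Lob a2 + Lob a3 + Lob a4) +
        (Lob b1 + Lob b2 + Lob b3) +
        Lob ((a1 + b1) + (a2 + b2) + (a3 + b3)) -
        Lob (a1 + b1) - Lob (a2 + b2) - Lob (a3 + b3) ≤ 8 * Lob (Real.pi / 4) ∧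
      8 * Lob (Real.pi / 4) = v8 := by
  refine ⟨?_, rfl⟩
  set σ := (a1 + b1) + (a2 + b2) + (a3 + b3) with hσ
  rw [show a1 + a2 + a3 + a4 + b1 + b2 + b3 = a4 + σ by ring]
  suffices lobDefect a1 b1 + lobDefect a2 b2 + lobDefect a3 b3 + lobDefect a4 σ ≤
      8 * Lob (π / 4) by
    unfold lobDefect at this
    linarith
  have hnum := six_mul_Lob_pi_div_six_le
  have hD₄ := lobDefect_le_two_mul_Lob_pi_div_six (y := σ) ha4 ha4' (by positivity) (by linarith)
  by_cases hs : a1 + b1 ≤ π ∧ a2 + b2 ≤ π ∧ a3 + b3 ≤ π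
  · obtain ⟨h₁, h₂, h₃⟩ := hs
    have hpairs := lobDefect_add_lobDefect_add_lobDefect_le ha1 ha2 ha3 hb1 hb2 hb3 h₁ h₂ h₃
    rw [← hσ] at hpairs
    rcases le_total σ π with hσπ | hπσ
    · have hmid := antitoneOn_Lob (a := π / 3) (b := π / 2 - σ / 6)
        ⟨by linarith [pi_pos], by linarith⟩ ⟨by linarith, by linarith [pi_pos]⟩ (by linarith)
      linarith [three_mul_Lob_pi_div_three]
    · have hP := three_mul_Lob_pi_div_four_sub_add_Lob_le (τ := σ / 6 - π / 4) (by linarith)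
        (by linarith)
      rw [show π / 4 - (σ / 6 - π / 4) = π / 2 - σ / 6 by ring,
        show π / 4 + 3 * (σ / 6 - π / 4) = (σ - π) / 2 by ring] at hP
      rw [← sub_add_cancel σ π, lobDefect_add_pi]
      linarith [lobDefect_le_two_mul_Lob_half ha4 ha4' (y := σ - π) (by linarith) (by linarith)]
  · simp only [not_and_or, not_le] at hs
    linarith [lobDefect_add_lobDefect_add_lobDefect_le_of_pi_lt ⟨ha1, ha1'⟩ ⟨ha2, ha2'⟩
      ⟨ha3, ha3'⟩ ⟨hb1, hb1'⟩ ⟨hb2, hb2'⟩ ⟨hb3, hb3'⟩ hs]
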